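/- arXiv:2509.13985 — 2 statements merged into one kernel-verified Lean document; each statement's English description precedes it below -/
import Mathlib

section
/- Let E be a real normed vector space, f : E → ℝ a nonzero continuous linear functional with operator norm ‖f‖, and c ∈ ℝ. Let H = {y ∈ E : f(y) ≤ c}. Then for every x ∈ E, the infimum distance from x to H equals max(f(x) − c, 0) / ‖f‖. -/
/-!
Lower bound: for `y` in the half-space, `f x - c ≤ f (x - y) ≤ ‖f‖ ‖x - y‖`.
Upper bound: for every direction `u` with `f u ≠ 0`, moving from `x` along `u` by
`(f x - c) / f u` lands on the boundary hyperplane, so `infDist * |f u| ≤ (f x - c) ‖u‖`;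
this says that `infDist • f` has operator norm at most `f x - c`.
-/

open Metric

namespace ContinuousLinearMap

variable {E : Type*} [NormedAddCommGroup E] [NormedSpace ℝ E]

lemma infDist_setOf_apply_le_mul_abs_le (f : E →L[ℝ] ℝ) (c : ℝ) (x u : E) :
    infDist x {y | f y ≤ c} * |f u| ≤ max (f x - c) 0 * ‖u‖ := by
  rcases le_or_gt (f x) c with hx | hx
  · rw [infDist_zero_of_mem (s := {y | f y ≤ c}) hx, zero_mul]
    positivity
  rcases eq_or_ne (f u) 0 with hu | hu
  · rw [hu, abs_zero, mul_zero]
    positivity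
  set t := (f x - c) / f u
  have hmem : x - t • u ∈ {y | f y ≤ c} := by simp [t, hu]
  calc infDist x {y | f y ≤ c} * |f u| ≤ dist x (x - t • u) * |f u| := by
        gcongr; exact infDist_le_dist_of_mem hmem
    _ = (f x - c) * ‖u‖ := by
        rw [dist_eq_norm, sub_sub_cancel, norm_smul, Real.norm_eq_abs, abs_div,
          abs_of_pos (sub_pos.2 hx)]
        field_simp
    _ = max (f x - c) 0 * ‖u‖ := by rw [max_eq_left (sub_pos.2 hx).le]

lemma infDist_setOf_apply_le_mul_opNorm_le (f : E →L[ℝ] ℝ) (c : ℝ) (x : E) :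
    infDist x {y | f y ≤ c} * ‖f‖ ≤ max (f x - c) 0 := by
  rw [← abs_of_nonneg (infDist_nonneg (x := x) (s := {y | f y ≤ c})), ← Real.norm_eq_abs,
    ← norm_smul]
  refine opNorm_le_bound _ (le_max_right _ _) fun u => ?_
  rw [smul_apply, norm_smul, Real.norm_eq_abs, Real.norm_eq_abs, abs_of_nonneg infDist_nonneg]
  exact infDist_setOf_apply_le_mul_abs_le f c x u

lemma div_opNorm_le_infDist_setOf_apply_le {f : E →L[ℝ] ℝ} (hf : f ≠ 0) (c : ℝ) (x : E) :
    max (f x - c) 0 / ‖f‖ ≤ infDist x {y | f y ≤ c} := by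
  obtain ⟨y₀, hy₀⟩ := LinearMap.surjective_of_ne_zero (f := (f : E →ₗ[ℝ] ℝ))
    (by exact_mod_cast hf) c
  rw [le_infDist ⟨y₀, hy₀.le⟩]
  intro y (hy : f y ≤ c)
  rw [div_le_iff₀' (norm_pos_iff.2 hf), dist_eq_norm]
  refine max_le ?_ (by positivity)
  calc f x - c ≤ f (x - y) := by rw [map_sub]; linarith
    _ ≤ ‖f‖ * ‖x - y‖ := (le_abs_self _).trans (f.le_opNorm _)

end ContinuousLinearMap

open ContinuousLinearMap in
theorem stmt6_general {E : Type*} [NormedAddCommGroup E] [NormedSpace ℝ E]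
    (f : E →L[ℝ] ℝ) (c : ℝ) (x : E) :
    Metric.infDist x {y : E | f y ≤ c} = max (f x - c) 0 / ‖f‖ := by
  rcases eq_or_ne f 0 with rfl | hf
  · rw [norm_zero, div_zero]
    by_cases hc : 0 ≤ c
    · exact infDist_zero_of_mem (by simpa using hc)
    · simp [hc]
  refine le_antisymm ?_ (div_opNorm_le_infDist_setOf_apply_le hf c x)
  rw [le_div_iff₀ (norm_pos_iff.2 hf)]
  exact infDist_setOf_apply_le_mul_opNorm_le f c x

/-- Let `E` be a real normed vector space, `f : E → ℝ` a nonzero continuous linear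
functional, `c ∈ ℝ`, and `H = {y : f y ≤ c}` the corresponding half-space.
Then for every `x ∈ E`, `infDist(x, H) = max (f x - c) 0 / ‖f‖`. -/
theorem stmt6 {E : Type*} [NormedAddCommGroup E] [NormedSpace ℝ E]
    (f : E →L[ℝ] ℝ) (hf : f ≠ 0) (c : ℝ) (x : E) :
    Metric.infDist x {y : E | f y ≤ c} = max (f x - c) 0 / ‖f‖ :=
  stmt6_general f c x
end

section
/- Let Q be a symmetric positive definite real n×n matrix, p ∈ ℝ^n, H a real m×n matrix, and g ∈ ℝ^m, and suppose the feasible set {x ∈ ℝ^n : H x ≤ g} is nonempty. Then strong duality holds: the minimum of (1/2) xᵀQx + pᵀx over the feasible set is attained and equals sup{ −(1/2)(p + Hᵀλ)ᵀ Q⁻¹ (p + Hᵀλ) − λᵀ g : λ ∈ ℝ^m, λ ≥ 0 }. -/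
open Matrix Finset Filter


private lemma dotR (n : ℕ) (u v w : Fin n → ℝ) (s : ℝ) :
    u ⬝ᵥ (v - s • w) = u ⬝ᵥ v - s * (u ⬝ᵥ w) := by
  simp [dotProduct_sub, dotProduct_smul, smul_eq_mul]

private lemma dotL (n : ℕ) (u v w : Fin n → ℝ) (s : ℝ) :
    (u - s • w) ⬝ᵥ v = u ⬝ᵥ v - s * (w ⬝ᵥ v) := by
  simp [sub_dotProduct, smul_dotProduct, smul_eq_mul]

theorem myFarkas (n : ℕ) : ∀ (m : ℕ) (a : Fin m → Fin n → ℝ) (c : Fin n → ℝ),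
    (∃ lam : Fin m → ℝ, (∀ i, 0 ≤ lam i) ∧ c = ∑ i, lam i • a i) ∨
    (∃ d : Fin n → ℝ, (∀ i, a i ⬝ᵥ d ≤ 0) ∧ 0 < c ⬝ᵥ d) := by
  intro m
  induction m with
  | zero =>
    intro a c
    by_cases hc : c = 0
    · exact Or.inl ⟨0, fun i => le_refl 0, by simp [hc]⟩
    · refine Or.inr ⟨c, fun i => i.elim0, ?_⟩
      have h : c ⬝ᵥ c = ∑ i, c i * c i := rfl
      rw [h]
      rcases Function.ne_iff.1 hc with ⟨i, hi⟩
      exact Finset.sum_pos' (fun j _ => mul_self_nonneg _)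
        ⟨i, Finset.mem_univ i, mul_self_pos.2 hi⟩
  | succ k ih =>
    intro a c
    set a' : Fin k → Fin n → ℝ := fun i => a i.castSucc with ha'
    set am : Fin n → ℝ := a (Fin.last k) with ham
    rcases ih a' c with ⟨lam, hlam, hc⟩ | ⟨d, hd, hcd⟩
    · refine Or.inl ⟨Fin.snoc lam 0, ?_, ?_⟩
      · intro i
        refine Fin.lastCases ?_ ?_ i <;> simp [hlam]
      · rw [Fin.sum_univ_castSucc]
        simp [hc, ha']
    · by_cases hmd : am ⬝ᵥ d ≤ 0
      · refine Or.inr ⟨d, ?_, hcd⟩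
        intro i
        refine Fin.lastCases hmd (fun j => hd j) i
      · push_neg at hmd
        have hne : am ⬝ᵥ d ≠ 0 := ne_of_gt hmd
        set ahat : Fin k → Fin n → ℝ :=
          fun i => a' i - ((a' i ⬝ᵥ d) / (am ⬝ᵥ d)) • am with hahat
        set chat : Fin n → ℝ := c - ((c ⬝ᵥ d) / (am ⬝ᵥ d)) • am with hchat
        rcases ih ahat chat with ⟨mu, hmu, hch⟩ | ⟨e, he, hce⟩
        · set t : ℝ := (c ⬝ᵥ d - ∑ i, mu i * (a' i ⬝ᵥ d)) / (am ⬝ᵥ d) with ht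
          have ht0 : 0 ≤ t := by
            apply div_nonneg _ hmd.le
            have hsum : ∑ i, mu i * (a' i ⬝ᵥ d) ≤ 0 := Finset.sum_nonpos fun i _ =>
              mul_nonpos_of_nonneg_of_nonpos (hmu i) (hd i)
            linarith
          refine Or.inl ⟨Fin.snoc mu t, ?_, ?_⟩
          · intro i; refine Fin.lastCases ?_ ?_ i <;> simp [ht0, hmu]
          · rw [Fin.sum_univ_castSucc]
            simp only [Fin.snoc_castSucc, Fin.snoc_last]
            have hc' : c = ∑ i, mu i • ahat i + ((c ⬝ᵥ d) / (am ⬝ᵥ d)) • am := by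
              rw [← hch, hchat]; abel
            rw [hc']
            have hsplit : ∑ i, mu i • ahat i
                = ∑ i, mu i • a' i - (∑ i, mu i * ((a' i ⬝ᵥ d) / (am ⬝ᵥ d))) • am := by
              rw [Finset.sum_smul, ← Finset.sum_sub_distrib]
              congr 1; funext i
              rw [hahat]
              simp only [smul_sub, smul_smul, smul_eq_mul]
            rw [hsplit, ht]
            have hcoef : (c ⬝ᵥ d - ∑ i, mu i * (a' i ⬝ᵥ d)) / (am ⬝ᵥ d)
                = (c ⬝ᵥ d) / (am ⬝ᵥ d) - ∑ i, mu i * ((a' i ⬝ᵥ d) / (am ⬝ᵥ d)) := by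
              rw [sub_div, Finset.sum_div]
              congr 1
              exact Finset.sum_congr rfl fun i _ => by ring
            rw [hcoef]
            module
        · set s : ℝ := (am ⬝ᵥ e) / (am ⬝ᵥ d) with hs
          refine Or.inr ⟨e - s • d, ?_, ?_⟩
          · intro i
            refine Fin.lastCases ?_ ?_ i
            · show am ⬝ᵥ (e - s • d) ≤ 0
              rw [dotR, hs]
              field_simp
              simp
            · intro j
              have hj := he j
              rw [hahat, dotL] at hj
              show a' j ⬝ᵥ (e - s • d) ≤ 0
              rw [dotR, hs]
              have : a' j ⬝ᵥ e - (am ⬝ᵥ e) / (am ⬝ᵥ d) * (a' j ⬝ᵥ d)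
                  = a' j ⬝ᵥ e - (a' j ⬝ᵥ d) / (am ⬝ᵥ d) * (am ⬝ᵥ e) := by ring
              rw [this]; exact hj
          · have hce' := hce
            rw [hchat, dotL] at hce'
            rw [dotR, hs]
            have : c ⬝ᵥ e - (am ⬝ᵥ e) / (am ⬝ᵥ d) * (c ⬝ᵥ d)
                = c ⬝ᵥ e - (c ⬝ᵥ d) / (am ⬝ᵥ d) * (am ⬝ᵥ e) := by ring
            rw [this]; exact hce'


private lemma quadPos {n : ℕ} {Q : Matrix (Fin n) (Fin n) ℝ} (hQ : Q.PosDef)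
    {x : Fin n → ℝ} (hx : x ≠ 0) : 0 < x ⬝ᵥ Q.mulVec x := by
  have := hQ.re_dotProduct_pos hx
  simpa using this

private lemma contQuad {n : ℕ} (Q : Matrix (Fin n) (Fin n) ℝ) :
    Continuous fun x : Fin n → ℝ => x ⬝ᵥ Q.mulVec x := by
  simp only [Matrix.mulVec, dotProduct]
  exact continuous_finset_sum _ fun i _ => (continuous_apply i).mul
    (continuous_finset_sum _ fun j _ => continuous_const.mul (continuous_apply j))

private lemma contDot {n : ℕ} (p : Fin n → ℝ) :
    Continuous fun x : Fin n → ℝ => p ⬝ᵥ x := by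
  simp only [dotProduct]
  exact continuous_finset_sum _ fun i _ => continuous_const.mul (continuous_apply i)

private lemma exists_primal_min {n m : ℕ} (Q : Matrix (Fin n) (Fin n) ℝ) (hQ : Q.PosDef)
    (p : Fin n → ℝ) (H : Matrix (Fin m) (Fin n) ℝ) (g : Fin m → ℝ)
    (hfeas : ∃ x : Fin n → ℝ, ∀ j, H.mulVec x j ≤ g j) :
    ∃ xs : Fin n → ℝ, (∀ j, H.mulVec xs j ≤ g j) ∧ ∀ y : Fin n → ℝ,
      (∀ j, H.mulVec y j ≤ g j) →
      (1/2) * (xs ⬝ᵥ Q.mulVec xs) + p ⬝ᵥ xs ≤ (1/2) * (y ⬝ᵥ Q.mulVec y) + p ⬝ᵥ y := by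
  obtain ⟨x0, hx0⟩ := hfeas
  set f : (Fin n → ℝ) → ℝ := fun x => (1/2) * (x ⬝ᵥ Q.mulVec x) + p ⬝ᵥ x with hf
  have hfc : Continuous f := (continuous_const.mul (contQuad Q)).add (contDot p)
  rcases Nat.eq_zero_or_pos n with hn | hn
  · subst hn
    refine ⟨x0, hx0, fun y hy => ?_⟩
    have : y = x0 := Subsingleton.elim _ _
    rw [this]
  -- n > 0 : coercivity
  have : Nontrivial (Fin n → ℝ) := by
    have : Nonempty (Fin n) := ⟨⟨0, hn⟩⟩
    infer_instance
  obtain ⟨u0, hu0⟩ := NormedSpace.sphere_nonempty (E := Fin n → ℝ) (x := 0) (r := 1) |>.2 zero_le_one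
  have hsph : IsCompact (Metric.sphere (0 : Fin n → ℝ) 1) := isCompact_sphere 0 1
  obtain ⟨u, hu, hmin⟩ := hsph.exists_isMinOn ⟨u0, hu0⟩ (contQuad Q).continuousOn
  set μ : ℝ := u ⬝ᵥ Q.mulVec u with hμ
  have hune : u ≠ 0 := by
    intro h
    rw [h] at hu
    simp at hu
  have hμpos : 0 < μ := quadPos hQ hune
  have hcoer : ∀ x : Fin n → ℝ, μ * ‖x‖ ^ 2 ≤ x ⬝ᵥ Q.mulVec x := by
    intro x
    rcases eq_or_ne x 0 with rfl | hx
    · simp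
    · have hnx : (0:ℝ) < ‖x‖ := norm_pos_iff.2 hx
      set w : Fin n → ℝ := ‖x‖⁻¹ • x with hw
      have hwsph : w ∈ Metric.sphere (0 : Fin n → ℝ) 1 := by
        simp [hw, norm_smul, abs_of_pos (inv_pos.2 hnx), inv_mul_cancel₀ hnx.ne']
      have h1 : μ ≤ w ⬝ᵥ Q.mulVec w := hmin hwsph
      have h2 : w ⬝ᵥ Q.mulVec w = ‖x‖⁻¹ ^ 2 * (x ⬝ᵥ Q.mulVec x) := by
        rw [hw, Matrix.mulVec_smul, dotProduct_smul, smul_dotProduct]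
        simp [smul_eq_mul]; ring
      rw [h2] at h1
      have := mul_le_mul_of_nonneg_left h1 (le_of_lt (by positivity : (0:ℝ) < ‖x‖ ^ 2))
      calc μ * ‖x‖ ^ 2 = ‖x‖ ^ 2 * μ := by ring
        _ ≤ ‖x‖ ^ 2 * (‖x‖⁻¹ ^ 2 * (x ⬝ᵥ Q.mulVec x)) := this
        _ = (x ⬝ᵥ Q.mulVec x) := by field_simp
  set C : ℝ := ∑ i, |p i| with hC
  have hC0 : 0 ≤ C := Finset.sum_nonneg fun i _ => abs_nonneg _
  have hpx : ∀ x : Fin n → ℝ, -(C * ‖x‖) ≤ p ⬝ᵥ x := by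
    intro x
    have h1 : |p ⬝ᵥ x| ≤ C * ‖x‖ := by
      calc |p ⬝ᵥ x| ≤ ∑ i, |p i * x i| := Finset.abs_sum_le_sum_abs _ _
        _ ≤ ∑ i, |p i| * ‖x‖ := by
            apply Finset.sum_le_sum
            intro i _
            rw [abs_mul]
            exact mul_le_mul_of_nonneg_left (norm_le_pi_norm x i) (abs_nonneg _)
        _ = C * ‖x‖ := by rw [← Finset.sum_mul]
    linarith [neg_abs_le (p ⬝ᵥ x)]
  -- compact sublevel set
  set R : ℝ := max 1 (2 * (|f x0| + C) / μ) with hR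
  set K : Set (Fin n → ℝ) := {x | (∀ j, H.mulVec x j ≤ g j) ∧ f x ≤ f x0} with hK
  have hKR : ∀ x ∈ K, ‖x‖ ≤ R := by
    rintro x ⟨-, hfx⟩
    by_cases h1 : ‖x‖ ≤ 1
    · exact h1.trans (le_max_left _ _)
    push_neg at h1
    have h2 : μ / 2 * ‖x‖ ^ 2 - C * ‖x‖ ≤ f x := by
      have := hcoer x
      have := hpx x
      rw [hf]
      dsimp only
      nlinarith
    have hx0p : (0:ℝ) < ‖x‖ := lt_trans one_pos h1
    have haux : |f x0| ≤ |f x0| * ‖x‖ := le_mul_of_one_le_right (abs_nonneg _) h1.le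
    have h2' : μ / 2 * ‖x‖ ^ 2 - C * ‖x‖ ≤ |f x0| := h2.trans (hfx.trans (le_abs_self _))
    have h3 : μ / 2 * ‖x‖ ^ 2 ≤ (|f x0| + C) * ‖x‖ := by nlinarith
    have h4 : μ / 2 * ‖x‖ ≤ |f x0| + C := by
      apply le_of_mul_le_mul_right _ hx0p
      calc μ / 2 * ‖x‖ * ‖x‖ = μ / 2 * ‖x‖ ^ 2 := by ring
        _ ≤ (|f x0| + C) * ‖x‖ := h3
    have hfin : ‖x‖ ≤ 2 * (|f x0| + C) / μ := by
      rw [le_div_iff₀ hμpos]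
      nlinarith
    exact hfin.trans (le_max_right _ _)
  have hSclosed : IsClosed {x : Fin n → ℝ | ∀ j, H.mulVec x j ≤ g j} := by
    have : {x : Fin n → ℝ | ∀ j, H.mulVec x j ≤ g j}
        = ⋂ j, {x | H.mulVec x j ≤ g j} := by
      ext x; simp
    rw [this]
    refine isClosed_iInter fun j => ?_
    have hc : Continuous fun x : Fin n → ℝ => H.mulVec x j := by
      simp only [Matrix.mulVec, dotProduct]
      exact continuous_finset_sum _ fun i _ => continuous_const.mul (continuous_apply i)
    exact isClosed_le hc continuous_const
  have hKclosed : IsClosed K := by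
    have : K = {x : Fin n → ℝ | ∀ j, H.mulVec x j ≤ g j} ∩ {x | f x ≤ f x0} := rfl
    rw [this]
    exact hSclosed.inter (isClosed_le hfc continuous_const)
  have hKcompact : IsCompact K := by
    apply Metric.isCompact_of_isClosed_isBounded hKclosed
    exact (Metric.isBounded_iff_subset_closedBall 0).2
      ⟨R, fun x hx => by simpa [Metric.mem_closedBall] using hKR x hx⟩
  have hKne : K.Nonempty := ⟨x0, hx0, le_refl _⟩
  obtain ⟨xs, hxsK, hxsmin⟩ := hKcompact.exists_isMinOn hKne hfc.continuousOn
  refine ⟨xs, hxsK.1, fun y hy => ?_⟩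
  by_cases hyK : f y ≤ f x0
  · exact hxsmin ⟨hy, hyK⟩
  · push_neg at hyK
    exact (hxsmin ⟨hx0, le_refl _⟩).trans hyK.le

private lemma symmDot {n : ℕ} {Q : Matrix (Fin n) (Fin n) ℝ} (hsymm : Q.IsSymm)
    (u v : Fin n → ℝ) : u ⬝ᵥ Q.mulVec v = v ⬝ᵥ Q.mulVec u := by
  rw [dotProduct_mulVec, ← mulVec_transpose, hsymm.eq, dotProduct_comm]

private lemma kkt {n m : ℕ} {Q : Matrix (Fin n) (Fin n) ℝ} (hsymm : Q.IsSymm)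
    {p : Fin n → ℝ} {H : Matrix (Fin m) (Fin n) ℝ} {g : Fin m → ℝ} {xs : Fin n → ℝ}
    (hxs : ∀ j, H.mulVec xs j ≤ g j)
    (hmin : ∀ y : Fin n → ℝ, (∀ j, H.mulVec y j ≤ g j) →
      (1/2) * (xs ⬝ᵥ Q.mulVec xs) + p ⬝ᵥ xs ≤ (1/2) * (y ⬝ᵥ Q.mulVec y) + p ⬝ᵥ y) :
    ∃ lam : Fin m → ℝ, (∀ j, 0 ≤ lam j) ∧
      p + Hᵀ.mulVec lam = -(Q.mulVec xs) ∧ lam ⬝ᵥ g = lam ⬝ᵥ H.mulVec xs := by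
  classical
  set a : Fin m → Fin n → ℝ :=
    fun j => if H.mulVec xs j = g j then (fun i => H j i) else 0 with ha
  set c : Fin n → ℝ := -(Q.mulVec xs + p) with hc
  rcases myFarkas n m a c with ⟨lam0, h0, hsum⟩ | ⟨d, hd, hcd⟩
  · set lam : Fin m → ℝ := fun j => if H.mulVec xs j = g j then lam0 j else 0 with hlam
    have hnn : ∀ j, 0 ≤ lam j := by
      intro j; rw [hlam]; dsimp only
      split
      · exact h0 j
      · exact le_refl 0
    have hrow : Hᵀ.mulVec lam = ∑ j, lam j • (fun i => H j i) := by
      funext i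
      rw [Finset.sum_apply]
      simp only [Matrix.mulVec, dotProduct, transpose_apply, Pi.smul_apply, smul_eq_mul]
      exact Finset.sum_congr rfl fun j _ => mul_comm _ _
    have hkey : (∑ j, lam0 j • a j) = ∑ j, lam j • (fun i => H j i) := by
      apply Finset.sum_congr rfl
      intro j _
      rw [ha, hlam]
      dsimp only
      split
      · rfl
      · simp
    have heq : Hᵀ.mulVec lam = c := by rw [hrow, ← hkey, ← hsum]
    refine ⟨lam, hnn, ?_, ?_⟩
    · rw [heq, hc]; funext i
      simp only [Pi.add_apply, Pi.neg_apply]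
      ring
    · have : ∀ j, lam j * g j = lam j * H.mulVec xs j := by
        intro j
        rw [hlam]; dsimp only
        split_ifs with h
        · rw [h]
        · simp
      simp only [dotProduct]
      exact Finset.sum_congr rfl fun j _ => this j
  · -- contradiction with minimality
    exfalso
    have hA : (Q.mulVec xs + p) ⬝ᵥ d < 0 := by
      rw [hc, neg_dotProduct] at hcd; linarith
    set A : ℝ := (Q.mulVec xs + p) ⬝ᵥ d with hAdef
    set B : ℝ := d ⬝ᵥ Q.mulVec d with hBdef
    have hexp : ∀ t : ℝ,
        (1/2) * ((xs + t • d) ⬝ᵥ Q.mulVec (xs + t • d)) + p ⬝ᵥ (xs + t • d)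
        = (1/2) * (xs ⬝ᵥ Q.mulVec xs) + p ⬝ᵥ xs + t * A + t^2/2 * B := by
      intro t
      have hsy : d ⬝ᵥ Q.mulVec xs = xs ⬝ᵥ Q.mulVec d := symmDot hsymm d xs
      rw [hAdef, hBdef]
      simp only [Matrix.mulVec_add, Matrix.mulVec_smul, dotProduct_add, add_dotProduct,
        dotProduct_smul, smul_dotProduct, smul_eq_mul, add_dotProduct]
      rw [dotProduct_comm (Q.mulVec xs) d, hsy]
      ring
    -- eventual feasibility
    have hEv1 : ∀ j : Fin m, ∀ᶠ t in nhdsWithin (0:ℝ) (Set.Ioi 0),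
        H.mulVec (xs + t • d) j ≤ g j := by
      intro j
      have hval : ∀ t : ℝ, H.mulVec (xs + t • d) j
          = H.mulVec xs j + t * H.mulVec d j := by
        intro t
        simp [Matrix.mulVec_add, Matrix.mulVec_smul, smul_eq_mul]
      by_cases hact : H.mulVec xs j = g j
      · have hdj : H.mulVec d j ≤ 0 := by
          have := hd j
          rw [ha] at this
          simp [hact] at this
          exact this
        filter_upwards [self_mem_nhdsWithin] with t ht
        rw [hval t, hact]
        have : t * H.mulVec d j ≤ 0 :=
          mul_nonpos_of_nonneg_of_nonpos (le_of_lt (Set.mem_Ioi.1 ht)) hdj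
        linarith
      · have hlt : H.mulVec xs j < g j := lt_of_le_of_ne (hxs j) hact
        have hcont : Tendsto (fun t : ℝ => H.mulVec xs j + t * H.mulVec d j)
            (nhdsWithin 0 (Set.Ioi 0)) (nhds (H.mulVec xs j)) := by
          have h1 : Tendsto (fun t : ℝ => H.mulVec xs j + t * H.mulVec d j)
              (nhds 0) (nhds (H.mulVec xs j + 0 * H.mulVec d j)) := by
            apply Continuous.tendsto
            exact continuous_const.add (continuous_id.mul continuous_const)
          rw [zero_mul, add_zero] at h1
          exact h1.mono_left nhdsWithin_le_nhds
        filter_upwards [hcont.eventually_lt_const hlt] with t ht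
        rw [hval t]
        exact ht.le
    -- eventual decrease
    have hEv2 : ∀ᶠ t in nhdsWithin (0:ℝ) (Set.Ioi 0),
        t * A + t^2/2 * B < 0 := by
      have hcont : Tendsto (fun t : ℝ => A + t/2 * B)
          (nhdsWithin 0 (Set.Ioi 0)) (nhds A) := by
        have h1 : Tendsto (fun t : ℝ => A + t/2 * B) (nhds 0) (nhds (A + 0/2 * B)) := by
          apply Continuous.tendsto
          fun_prop
        rw [zero_div, zero_mul, add_zero] at h1
        exact h1.mono_left nhdsWithin_le_nhds
      filter_upwards [hcont.eventually_lt_const hA, self_mem_nhdsWithin] with t ht htpos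
      have htp : (0:ℝ) < t := Set.mem_Ioi.1 htpos
      have : t * (A + t/2 * B) < 0 := mul_neg_of_pos_of_neg htp ht
      nlinarith
    have hall : ∀ᶠ t in nhdsWithin (0:ℝ) (Set.Ioi 0),
        (∀ j, H.mulVec (xs + t • d) j ≤ g j) ∧ t * A + t^2/2 * B < 0 :=
      (eventually_all.2 hEv1).and hEv2
    obtain ⟨t, hfeas', hdec⟩ := hall.exists
    have := hmin (xs + t • d) hfeas'
    rw [hexp t] at this
    linarith

private lemma weakDual {n m : ℕ} {Q : Matrix (Fin n) (Fin n) ℝ} (hsymm : Q.IsSymm)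
    (hQ : Q.PosDef) {p : Fin n → ℝ} {H : Matrix (Fin m) (Fin n) ℝ} {g : Fin m → ℝ}
    {xs : Fin n → ℝ} (hxs : ∀ j, H.mulVec xs j ≤ g j)
    (lam : Fin m → ℝ) (hlam : ∀ j, 0 ≤ lam j) :
    -(1/2) * ((p + Hᵀ.mulVec lam) ⬝ᵥ Q⁻¹.mulVec (p + Hᵀ.mulVec lam)) - lam ⬝ᵥ g
      ≤ (1/2) * (xs ⬝ᵥ Q.mulVec xs) + p ⬝ᵥ xs := by
  set c : Fin n → ℝ := p + Hᵀ.mulVec lam with hcdef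
  have hdet : IsUnit Q.det := hQ.det_pos.ne'.isUnit
  have hQinv : Q.mulVec (Q⁻¹.mulVec c) = c := by
    rw [Matrix.mulVec_mulVec, Matrix.mul_nonsing_inv _ hdet, Matrix.one_mulVec]
  clear_value c
  set z : Fin n → ℝ := xs + Q⁻¹.mulVec c with hzdef
  have hz : 0 ≤ z ⬝ᵥ Q.mulVec z := by
    have := hQ.posSemidef.re_dotProduct_nonneg z
    simpa using this
  clear_value z
  have hexp : z ⬝ᵥ Q.mulVec z
      = xs ⬝ᵥ Q.mulVec xs + 2 * (c ⬝ᵥ xs) + c ⬝ᵥ Q⁻¹.mulVec c := by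
    rw [hzdef]
    rw [Matrix.mulVec_add, dotProduct_add, add_dotProduct, add_dotProduct]
    rw [hQinv]
    have h1 : xs ⬝ᵥ c = c ⬝ᵥ xs := dotProduct_comm _ _
    have h2 : Q⁻¹.mulVec c ⬝ᵥ Q.mulVec xs = xs ⬝ᵥ Q.mulVec (Q⁻¹.mulVec c) :=
      symmDot hsymm _ _
    have h3 : Q⁻¹.mulVec c ⬝ᵥ c = c ⬝ᵥ Q⁻¹.mulVec c := dotProduct_comm _ _
    rw [h1, h2, hQinv, h1, h3]
    ring
  have hkey : -(1/2) * (c ⬝ᵥ Q⁻¹.mulVec c) ≤ (1/2) * (xs ⬝ᵥ Q.mulVec xs) + c ⬝ᵥ xs := by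
    rw [hexp] at hz; linarith
  have hcx : c ⬝ᵥ xs = p ⬝ᵥ xs + lam ⬝ᵥ H.mulVec xs := by
    rw [hcdef, add_dotProduct, Matrix.mulVec_transpose, ← Matrix.dotProduct_mulVec]
  have hslack : lam ⬝ᵥ H.mulVec xs - lam ⬝ᵥ g ≤ 0 := by
    have : lam ⬝ᵥ H.mulVec xs - lam ⬝ᵥ g = ∑ j, lam j * (H.mulVec xs j - g j) := by
      simp only [dotProduct, ← Finset.sum_sub_distrib]
      exact Finset.sum_congr rfl fun j _ => by ring
    rw [this]
    exact Finset.sum_nonpos fun j _ =>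
      mul_nonpos_of_nonneg_of_nonpos (hlam j) (sub_nonpos.2 (hxs j))
  linarith

/-- Strong duality for the convex quadratic program
`min (1/2) xᵀQx + pᵀx  s.t.  H x ≤ g` with `Q` symmetric positive definite and
nonempty feasible set: the primal minimum is attained and equals
`sup { -(1/2)(p + Hᵀλ)ᵀ Q⁻¹ (p + Hᵀλ) - λᵀ g : λ ≥ 0 }`. -/
theorem stmt11 (n m : ℕ) (Q : Matrix (Fin n) (Fin n) ℝ) (hsymm : Q.IsSymm) (hQ : Q.PosDef)
    (p : Fin n → ℝ) (H : Matrix (Fin m) (Fin n) ℝ) (g : Fin m → ℝ)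
    (hfeas : ∃ x : Fin n → ℝ, ∀ j, H.mulVec x j ≤ g j) :
    ∃ v : ℝ,
      IsLeast {v : ℝ | ∃ x : Fin n → ℝ, (∀ j, H.mulVec x j ≤ g j) ∧
          v = (1/2) * (x ⬝ᵥ Q.mulVec x) + p ⬝ᵥ x} v ∧
      v = sSup {v : ℝ | ∃ lam : Fin m → ℝ, (∀ j, 0 ≤ lam j) ∧
          v = -(1/2) * ((p + Hᵀ.mulVec lam) ⬝ᵥ Q⁻¹.mulVec (p + Hᵀ.mulVec lam))
            - lam ⬝ᵥ g} := by
  obtain ⟨xs, hxs, hmin⟩ := exists_primal_min Q hQ p H g hfeas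
  obtain ⟨lam, hlam, hgrad, hcs⟩ := kkt hsymm hxs hmin
  have hdet : IsUnit Q.det := hQ.det_pos.ne'.isUnit
  refine ⟨(1/2) * (xs ⬝ᵥ Q.mulVec xs) + p ⬝ᵥ xs, ⟨⟨xs, hxs, rfl⟩, ?_⟩, ?_⟩
  · rintro w ⟨y, hy, rfl⟩
    exact hmin y hy
  · -- dual value at lam equals the primal value
    have hdualval : -(1/2) * ((p + Hᵀ.mulVec lam) ⬝ᵥ Q⁻¹.mulVec (p + Hᵀ.mulVec lam))
        - lam ⬝ᵥ g = (1/2) * (xs ⬝ᵥ Q.mulVec xs) + p ⬝ᵥ xs := by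
      rw [hgrad]
      have h1 : Q⁻¹.mulVec (-(Q.mulVec xs)) = -xs := by
        rw [Matrix.mulVec_neg, Matrix.mulVec_mulVec, Matrix.nonsing_inv_mul _ hdet,
          Matrix.one_mulVec]
      rw [h1]
      have h2 : (-(Q.mulVec xs)) ⬝ᵥ (-xs) = Q.mulVec xs ⬝ᵥ xs := by
        rw [neg_dotProduct, dotProduct_neg, neg_neg]
      rw [h2]
      have h3 : lam ⬝ᵥ g = (-(Q.mulVec xs) - p) ⬝ᵥ xs := by
        rw [hcs]
        have h4 : lam ⬝ᵥ H.mulVec xs = Hᵀ.mulVec lam ⬝ᵥ xs := by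
          rw [Matrix.mulVec_transpose, ← Matrix.dotProduct_mulVec]
        rw [h4]
        have h5 : Hᵀ.mulVec lam = -(Q.mulVec xs) - p := by
          have := hgrad
          funext i
          have hi := congrFun this i
          simp only [Pi.add_apply, Pi.neg_apply, Pi.sub_apply] at hi ⊢
          linarith
        rw [h5]
      rw [h3]
      have h6 : Q.mulVec xs ⬝ᵥ xs = xs ⬝ᵥ Q.mulVec xs := dotProduct_comm _ _
      rw [h6, sub_dotProduct, neg_dotProduct, h6]
      ring
    apply le_antisymm
    · apply le_csSup
      · -- bounded above
        refine ⟨(1/2) * (xs ⬝ᵥ Q.mulVec xs) + p ⬝ᵥ xs, ?_⟩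
        rintro w ⟨lam', hlam', rfl⟩
        exact weakDual hsymm hQ hxs lam' hlam'
      · exact ⟨lam, hlam, hdualval.symm⟩
    · apply csSup_le
      · exact ⟨_, lam, hlam, hdualval.symm⟩
      · rintro w ⟨lam', hlam', rfl⟩
        exact weakDual hsymm hQ hxs lam' hlam'
end
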